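/- arXiv:1612.03750 — 2 statements merged into one kernel-verified Lean document; each statement's English description precedes it below -/
import Mathlib

section
/- Let χ be the indicator function of V∖K for a finite subset K of V, and let χ̄(e) = (χ(e⁺)+χ(e⁻))/2. Then for any finitely supported skewsymmetric φ, there exists a constant C > 0 (depending on K, c, r and the finite neighborhood K̃) such that ‖δ(χ̄φ)‖²_{ℓ²(V)} ≤ C(‖δφ‖²_{ℓ²(V)} + ‖φ‖²_{ℓ²(E_K̃)}), where E_K̃ is a finite edge set containing E_K and the edge boundary ∂E_K. -/
open scoped BigOperators
open Function Filter

structure WGraph (V : Type*) where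
  E : Set (V × V)
  symm : ∀ e ∈ E, (e.2, e.1) ∈ E
  noloop : ∀ v : V, (v, v) ∉ E
  c : V → ℝ
  r : V × V → ℝ
  cpos : ∀ v, 0 < c v
  rpos : ∀ e, 0 < r e
  rsymm : ∀ e : V × V, r (e.2, e.1) = r e
  locfin : ∀ v : V, {e : V × V | e ∈ E ∧ e.1 = v}.Finite

variable {V : Type*}

/-- The difference operator `(df)(e) = f(e⁺) - f(e⁻)`. -/
def dOp (f : V → ℝ) : V × V → ℝ := fun e => f e.2 - f e.1

/-- The coboundary operator `(δφ)(x) = (1/c x) Σ_{e ∈ E, e⁺ = x} r e * φ e`. -/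
noncomputable def deltaOp (G : WGraph V) (φ : V × V → ℝ) : V → ℝ :=
  fun x => (G.c x)⁻¹ * ∑ᶠ e ∈ {e : V × V | e ∈ G.E ∧ e.2 = x}, G.r e * φ e

/-- Skewsymmetric function on oriented edges. -/
def Skew (φ : V × V → ℝ) : Prop := ∀ e : V × V, φ (e.2, e.1) = -φ e

/-- Finitely supported function. -/
def FinSupp {α β : Type*} [Zero β] (f : α → β) : Prop := (Function.support f).Finite

/-- Connectedness of a graph: any two vertices joined by a path of edges. -/
def WGraph.Connected (G : WGraph V) : Prop :=
  ∀ x y : V, ∃ n : ℕ, ∃ p : ℕ → V, p 0 = x ∧ p n = y ∧ ∀ i < n, (p i, p (i + 1)) ∈ G.E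

/-- Inner product on vertex functions: `Σ_x c x * f x * g x`. -/
noncomputable def innerV (G : WGraph V) (f g : V → ℝ) : ℝ := ∑ᶠ x : V, G.c x * (f x * g x)

/-- Inner product on edge functions: `(1/2) Σ_{e ∈ E} r e * φ e * ψ e`. -/
noncomputable def innerE (G : WGraph V) (φ ψ : V × V → ℝ) : ℝ :=
  (1 / 2) * ∑ᶠ e ∈ G.E, G.r e * (φ e * ψ e)

/-- Squared ℓ² norm of the pair `(f, φ)` restricted to vertices in `S` and edges in `T`. -/
noncomputable def sqnormOn (G : WGraph V) (S : Set V) (T : Set (V × V)) (f : V → ℝ)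
    (φ : V × V → ℝ) : ℝ :=
  (∑ᶠ x ∈ S, G.c x * f x ^ 2) + (1 / 2) * ∑ᶠ e ∈ T, G.r e * φ e ^ 2

/-- Edges of the subgraph induced by `K`. -/
def EK (G : WGraph V) (K : Set V) : Set (V × V) := {e ∈ G.E | e.1 ∈ K ∧ e.2 ∈ K}

/-- Edge boundary of `K`: edges with exactly one endpoint in `K`. -/
def edgeBdry (G : WGraph V) (K : Set V) : Set (V × V) :=
  {e ∈ G.E | (e.1 ∈ K ∧ e.2 ∉ K) ∨ (e.1 ∉ K ∧ e.2 ∈ K)}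

/-- `D = d + δ` is non-parabolic at infinity with respect to the finite subgraph on `K`. -/
noncomputable def NonParabolicAt (G : WGraph V) (K : Set V) : Prop :=
  ∀ VU : Set V, ∀ EU : Set (V × V), VU.Finite → EU.Finite →
    VU ⊆ Kᶜ → EU ⊆ G.E \ EK G K →
    ∃ C > 0, ∀ f : V → ℝ, ∀ φ : V × V → ℝ,
      FinSupp f → FinSupp φ → Skew φ →
      Function.support f ⊆ Kᶜ → Function.support φ ⊆ G.E \ EK G K →
      C * Real.sqrt (sqnormOn G VU EU f φ) ≤
        Real.sqrt (sqnormOn G Kᶜ (G.E \ EK G K) (deltaOp G φ) (dOp f))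

/-- `(Kt, Et)` is a (finite-subgraph) neighborhood of the subgraph on `K`. -/
def IsNbhd (G : WGraph V) (K Kt : Set V) (Et : Set (V × V)) : Prop :=
  Kt.Finite ∧ Et.Finite ∧ K ⊆ Kt ∧ EK G K ∪ edgeBdry G K ⊆ Et ∧ Et ⊆ G.E ∧
    ∀ e ∈ Et, e.1 ∈ Kt ∧ e.2 ∈ Kt

/-- Existence of a cycle in the graph. -/
def HasCycle (G : WGraph V) : Prop :=
  ∃ n : ℕ, 3 ≤ n ∧ ∃ p : ℕ → V, p n = p 0 ∧
    (∀ i j : ℕ, i < n → j < n → p i = p j → i = j) ∧ ∀ i < n, (p i, p (i + 1)) ∈ G.E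

/-- The outward edges of generation `m` in the two binary subtrees (`Ev` and `Bv` sides)
emanating from the vertex `x₀` of the triadic tree. -/
def genEdges (x₀ : V) (Ev Bv : ℕ → ℕ → V) : ℕ → Set (V × V)
  | 0 => {(x₀, Ev 0 0), (x₀, Bv 0 0)}
  | m + 1 => {p | ∃ k, k < 2 ^ (m + 1) ∧
      (p = (Ev m (k / 2), Ev (m + 1) k) ∨ p = (Bv m (k / 2), Bv (m + 1) k))}

/-- A set of oriented edges together with all reversed edges. -/
def symEdges (S : Set (V × V)) : Set (V × V) := {p | p ∈ S ∨ (p.2, p.1) ∈ S}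

/-!
Write `χ̄ φ = φ + ψ` with `ψ = (χ̄ - 1) φ`. Since `χ̄ = 1` on edges with both endpoints
outside `K`, `ψ` is supported in `E_K ∪ ∂E_K ⊆ Et`, and `|ψ| ≤ |φ|` because `χ̄ ∈ {0, 1/2, 1}`.
Hence `‖δ(χ̄ φ)‖² ≤ 2 ‖δφ‖² + 2 ‖δψ‖²`, and on functions supported in the finite edge set `Et`
the coboundary is bounded: Cauchy–Schwarz at each vertex gives
`‖δψ‖² ≤ #Et · (∑_{e ∈ Et} r e / c e⁺) · ∑_{e ∈ Et} r e ψ(e)²`.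
-/

open Finset

noncomputable def sqNormV (G : WGraph V) (f : V → ℝ) : ℝ := ∑ᶠ x, G.c x * f x ^ 2

open Classical in
/-- `χ̄(e) = (χ(e⁺) + χ(e⁻)) / 2`, with `χ` the indicator function of `Kᶜ`. -/
noncomputable def edgeCutoff (K : Set V) (e : V × V) : ℝ :=
  ((if e.2 ∈ K then (0 : ℝ) else 1) + (if e.1 ∈ K then (0 : ℝ) else 1)) / 2

section Coboundary

variable (G : WGraph V)

open Classical in
theorem deltaOp_eq_sum_of_support_subset {ρ : V × V → ℝ} {F : Finset (V × V)}
    (hρ : support ρ ⊆ ↑F) (x : V) :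
    deltaOp G ρ x = (G.c x)⁻¹ * ∑ e ∈ F with e ∈ G.E ∧ e.2 = x, G.r e * ρ e := by
  unfold deltaOp
  congr 1
  apply finsum_mem_eq_sum_of_inter_support_eq
  ext e
  simp only [Set.mem_inter_iff, Set.mem_ofPred_eq, Finset.coe_filter, Function.mem_support]
  exact ⟨fun ⟨hex, hne⟩ => ⟨⟨hρ (right_ne_zero_of_mul hne), hex⟩, hne⟩,
    fun ⟨⟨_, hex⟩, hne⟩ => ⟨hex, hne⟩⟩

theorem support_deltaOp_subset (φ : V × V → ℝ) :
    support (deltaOp G φ) ⊆ Prod.snd '' support φ := by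
  intro x hx
  obtain ⟨e, ⟨_, rfl⟩, he⟩ := exists_ne_zero_of_finsum_mem_ne_zero (right_ne_zero_of_mul hx)
  exact ⟨e, right_ne_zero_of_mul he, rfl⟩

theorem FinSupp.deltaOp {φ : V × V → ℝ} (hφ : FinSupp φ) : FinSupp (deltaOp G φ) :=
  (Set.Finite.image Prod.snd hφ).subset (support_deltaOp_subset G φ)

theorem deltaOp_add {φ ψ : V × V → ℝ} (hφ : FinSupp φ) (hψ : FinSupp ψ) :
    deltaOp G (φ + ψ) = deltaOp G φ + deltaOp G ψ := by
  classical
  set F := (hφ.union hψ).toFinset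
  have hF : ∀ ρ : V × V → ℝ, support ρ ⊆ support φ ∪ support ψ →
      support ρ ⊆ ↑F := fun ρ h => by rwa [Set.Finite.coe_toFinset]
  ext x
  rw [Pi.add_apply, deltaOp_eq_sum_of_support_subset G (hF (φ + ψ) (support_add _ _)),
    deltaOp_eq_sum_of_support_subset G (hF φ Set.subset_union_left),
    deltaOp_eq_sum_of_support_subset G (hF ψ Set.subset_union_right), ← mul_add,
    ← Finset.sum_add_distrib]
  simp only [Pi.add_apply, mul_add]

theorem sqNormV_add_le {f g : V → ℝ} (hf : FinSupp f) (hg : FinSupp g) :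
    sqNormV G (f + g) ≤ 2 * (sqNormV G f + sqNormV G g) := by
  classical
  set S := (hf.union hg).toFinset
  have hS : ∀ h : V → ℝ, support h ⊆ support f ∪ support g →
      support (fun x => G.c x * h x ^ 2) ⊆ ↑S := fun h hh x hx => by
    rw [Set.Finite.coe_toFinset]
    exact hh ((pow_ne_zero_iff two_ne_zero).mp (right_ne_zero_of_mul hx))
  unfold sqNormV
  rw [finsum_eq_sum_of_support_subset _ (hS (f + g) (support_add _ _)),
    finsum_eq_sum_of_support_subset _ (hS f Set.subset_union_left),
    finsum_eq_sum_of_support_subset _ (hS g Set.subset_union_right),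
    ← Finset.sum_add_distrib, Finset.mul_sum]
  refine Finset.sum_le_sum fun x _ => ?_
  have hc := (G.cpos x).le
  simp only [Pi.add_apply]
  nlinarith [mul_nonneg hc (sq_nonneg (f x - g x))]

end Coboundary

section LocalBound

variable (G : WGraph V)

open Classical in
theorem mul_deltaOp_sq_le {ψ : V × V → ℝ} {F : Finset (V × V)} (hψ : support ψ ⊆ ↑F) {B : ℝ}
    (hB : ∀ e ∈ F, G.r e / G.c e.2 ≤ B) (x : V) :
    G.c x * deltaOp G ψ x ^ 2 ≤ #F * B * ∑ e ∈ F with e ∈ G.E ∧ e.2 = x, G.r e * ψ e ^ 2 := by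
  set Fx := F.filter (fun e => e ∈ G.E ∧ e.2 = x)
  have hcx := G.cpos x
  have hcard : (#Fx : ℝ) ≤ #F := by exact_mod_cast Finset.card_filter_le _ _
  rw [deltaOp_eq_sum_of_support_subset G hψ x]
  calc G.c x * ((G.c x)⁻¹ * ∑ e ∈ Fx, G.r e * ψ e) ^ 2
      = (G.c x)⁻¹ * (∑ e ∈ Fx, G.r e * ψ e) ^ 2 := by field_simp
    _ ≤ (G.c x)⁻¹ * (#Fx * ∑ e ∈ Fx, (G.r e * ψ e) ^ 2) := by
        gcongr; exact sq_sum_le_card_mul_sum_sq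
    _ ≤ (G.c x)⁻¹ * (#F * ∑ e ∈ Fx, (G.r e * ψ e) ^ 2) := by gcongr
    _ = #F * ∑ e ∈ Fx, G.r e / G.c e.2 * (G.r e * ψ e ^ 2) := by
        rw [Finset.mul_sum, Finset.mul_sum, Finset.mul_sum]
        refine Finset.sum_congr rfl fun e he => ?_
        rw [(Finset.mem_filter.mp he).2.2]
        ring
    _ ≤ #F * ∑ e ∈ Fx, B * (G.r e * ψ e ^ 2) := by
        gcongr with e he
        · exact mul_nonneg (G.rpos e).le (sq_nonneg _)
        · exact hB e (Finset.mem_filter.mp he).1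
    _ = #F * B * ∑ e ∈ Fx, G.r e * ψ e ^ 2 := by rw [← Finset.mul_sum, mul_assoc]

theorem exists_sqNormV_deltaOp_le {T : Set (V × V)} (hT : T.Finite) :
    ∃ C ≥ 0, ∀ ψ : V × V → ℝ, support ψ ⊆ T →
      sqNormV G (deltaOp G ψ) ≤ C * ∑ᶠ e ∈ T, G.r e * ψ e ^ 2 := by
  classical
  set F := hT.toFinset
  set B := ∑ e ∈ F, G.r e / G.c e.2
  have hweight : ∀ e, 0 ≤ G.r e / G.c e.2 := fun e => (div_pos (G.rpos e) (G.cpos e.2)).le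
  have hB : ∀ e ∈ F, G.r e / G.c e.2 ≤ B := fun e he =>
    Finset.single_le_sum (fun e _ => hweight e) he
  have hB0 : 0 ≤ B := Finset.sum_nonneg fun e _ => hweight e
  refine ⟨#F * B, by positivity, fun ψ hψT => ?_⟩
  have hψF : support ψ ⊆ ↑F := by rwa [Set.Finite.coe_toFinset]
  have hsupp : support (fun x => G.c x * deltaOp G ψ x ^ 2) ⊆ ↑(F.image Prod.snd) := by
    intro x hx
    obtain ⟨e, he, rfl⟩ := support_deltaOp_subset G ψ
      ((pow_ne_zero_iff two_ne_zero).mp (right_ne_zero_of_mul hx))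
    exact Finset.mem_coe.mpr (Finset.mem_image_of_mem _ (hψF he))
  have hfib : ∀ e ∈ F.filter (· ∈ G.E), e.2 ∈ F.image Prod.snd := fun e he =>
    Finset.mem_image_of_mem _ (Finset.mem_filter.mp he).1
  calc sqNormV G (deltaOp G ψ)
      = ∑ x ∈ F.image Prod.snd, G.c x * deltaOp G ψ x ^ 2 :=
        finsum_eq_sum_of_support_subset _ hsupp
    _ ≤ ∑ x ∈ F.image Prod.snd,
          #F * B * ∑ e ∈ F.filter (· ∈ G.E) with e.2 = x, G.r e * ψ e ^ 2 := by
        refine Finset.sum_le_sum fun x _ => ?_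
        rw [Finset.filter_filter]
        exact mul_deltaOp_sq_le G hψF hB x
    _ = #F * B * ∑ e ∈ F.filter (· ∈ G.E), G.r e * ψ e ^ 2 := by
        rw [← Finset.mul_sum, Finset.sum_fiberwise_of_maps_to hfib]
    _ ≤ #F * B * ∑ e ∈ F, G.r e * ψ e ^ 2 := by
        gcongr
        · exact fun e _ _ => mul_nonneg (G.rpos e).le (sq_nonneg _)
        · exact Finset.filter_subset _ F
    _ = #F * B * ∑ᶠ e ∈ T, G.r e * ψ e ^ 2 := by
        rw [← finsum_mem_coe_finset, Set.Finite.coe_toFinset]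

end LocalBound

section Cutoff

variable {K : Set V}

theorem edgeCutoff_sub_one_sq_le (e : V × V) : (edgeCutoff K e - 1) ^ 2 ≤ 1 := by
  unfold edgeCutoff
  split_ifs <;> norm_num

theorem edgeCutoff_eq_one {e : V × V} (h1 : e.1 ∉ K) (h2 : e.2 ∉ K) : edgeCutoff K e = 1 := by
  simp [edgeCutoff, h1, h2]

theorem mem_EK_union_edgeBdry {G : WGraph V} {e : V × V} (he : e ∈ G.E)
    (hK : e.1 ∈ K ∨ e.2 ∈ K) : e ∈ EK G K ∪ edgeBdry G K := by
  by_cases h1 : e.1 ∈ K <;> by_cases h2 : e.2 ∈ K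
  · exact Or.inl ⟨he, h1, h2⟩
  · exact Or.inr ⟨he, Or.inl ⟨h1, h2⟩⟩
  · exact Or.inr ⟨he, Or.inr ⟨h1, h2⟩⟩
  · exact absurd hK (by tauto)

theorem support_edgeCutoff_sub_one_mul_subset {G : WGraph V} {φ : V × V → ℝ}
    (hφ : support φ ⊆ G.E) :
    support (fun e => (edgeCutoff K e - 1) * φ e) ⊆ EK G K ∪ edgeBdry G K := by
  intro e he
  refine mem_EK_union_edgeBdry (hφ (right_ne_zero_of_mul he)) ?_
  by_contra! h
  exact left_ne_zero_of_mul he (sub_eq_zero.mpr (edgeCutoff_eq_one h.1 h.2))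

end Cutoff

open Classical in
theorem stmt7_general (G : WGraph V) (K : Set V) (Et : Set (V × V))
    (hEt : Et.Finite) (hsub : EK G K ∪ edgeBdry G K ⊆ Et) :
    ∃ C > 0, ∀ φ : V × V → ℝ, FinSupp φ → Skew φ → Function.support φ ⊆ G.E →
      (∑ᶠ x : V, G.c x *
          deltaOp G (fun e =>
            ((if e.2 ∈ K then (0 : ℝ) else 1) + (if e.1 ∈ K then (0 : ℝ) else 1)) / 2
              * φ e) x ^ 2) ≤
        C * ((∑ᶠ x : V, G.c x * deltaOp G φ x ^ 2) +
          (1 / 2) * ∑ᶠ e ∈ Et, G.r e * φ e ^ 2) := by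
  obtain ⟨C, hC, hlocal⟩ := exists_sqNormV_deltaOp_le G hEt
  refine ⟨2 + 4 * C, by positivity, fun φ hφ _ hφE => ?_⟩
  set ψ := fun e => (edgeCutoff K e - 1) * φ e
  have hψ : FinSupp ψ := hφ.subset (support_mul_subset_right _ _)
  have hsplit : (fun e => edgeCutoff K e * φ e) = φ + ψ := by
    funext e
    simp only [ψ, Pi.add_apply]
    ring
  have hψφ : ∑ᶠ e ∈ Et, G.r e * ψ e ^ 2 ≤ ∑ᶠ e ∈ Et, G.r e * φ e ^ 2 := by
    rw [← hEt.coe_toFinset, finsum_mem_coe_finset, finsum_mem_coe_finset]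
    refine Finset.sum_le_sum fun e _ => mul_le_mul_of_nonneg_left ?_ (G.rpos e).le
    calc ψ e ^ 2 = (edgeCutoff K e - 1) ^ 2 * φ e ^ 2 := by ring
      _ ≤ φ e ^ 2 := mul_le_of_le_one_left (sq_nonneg _) (edgeCutoff_sub_one_sq_le e)
  have hδφ : 0 ≤ sqNormV G (deltaOp G φ) :=
    finsum_nonneg fun x => mul_nonneg (G.cpos x).le (sq_nonneg _)
  have hφEt : 0 ≤ ∑ᶠ e ∈ Et, G.r e * φ e ^ 2 :=
    finsum_nonneg fun e => finsum_nonneg fun _ => mul_nonneg (G.rpos e).le (sq_nonneg _)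
  have hδψ := hlocal ψ ((support_edgeCutoff_sub_one_mul_subset hφE).trans hsub)
  change sqNormV G (deltaOp G (fun e => edgeCutoff K e * φ e)) ≤
    (2 + 4 * C) * (sqNormV G (deltaOp G φ) + 1 / 2 * ∑ᶠ e ∈ Et, G.r e * φ e ^ 2)
  rw [hsplit, deltaOp_add G hφ hψ]
  have := sqNormV_add_le G (hφ.deltaOp G) (hψ.deltaOp G)
  nlinarith [mul_le_mul_of_nonneg_left hψφ hC]

open Classical in
theorem stmt7 (G : WGraph V) (K : Set V) (hK : K.Finite) (Et : Set (V × V))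
    (hEt : Et.Finite) (hsub : EK G K ∪ edgeBdry G K ⊆ Et) (hEtE : Et ⊆ G.E) :
    ∃ C > 0, ∀ φ : V × V → ℝ, FinSupp φ → Skew φ → Function.support φ ⊆ G.E →
      (∑ᶠ x : V, G.c x *
          deltaOp G (fun e =>
            ((if e.2 ∈ K then (0 : ℝ) else 1) + (if e.1 ∈ K then (0 : ℝ) else 1)) / 2
              * φ e) x ^ 2) ≤
        C * ((∑ᶠ x : V, G.c x * deltaOp G φ x ^ 2) +
          (1 / 2) * ∑ᶠ e ∈ Et, G.r e * φ e ^ 2) :=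
  stmt7_general G K Et hEt hsub
end

section
/- Suppose there is a finite subgraph G_K of G and C > 0 such that C‖(f,φ)‖_W ≤ ‖D(f,φ)‖_{ℓ²(G)} for all (f,φ) finitely supported in (V∖K) × (E∖E_K). Then D : W → ℓ²(G) is semi-Fredholm: its kernel is finite-dimensional and its range is closed. -/
/-!
Let `W₀ ⊆ W` be the closure of the finitely supported pairs that live outside the finite
subgraph `(K, E_K)`. The coercivity estimate passes to `W₀`. Every finitely supported pair is
its part outside `(K, E_K)` plus a pair supported on the finite set `K × E_K`, so `W₀` plus a
finite-dimensional subspace is closed and contains a dense set; hence `W₀` has finite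
codimension. An operator bounded below on a closed subspace of finite codimension has
finite-dimensional kernel (the kernel meets `W₀` trivially) and closed range (the image of `W₀`
is closed, and a finite-dimensional summand keeps it closed).
-/
open scoped BigOperators
open Function Filter

variable {V : Type*}

section SemiFredholm

variable {𝕜 E F : Type*} [NontriviallyNormedField 𝕜]
  [NormedAddCommGroup E] [NormedSpace 𝕜 E] [NormedAddCommGroup F] [NormedSpace 𝕜 F]

theorem ContinuousLinearMap.mul_norm_le_norm_apply_of_mem_topologicalClosure (T : E →L[𝕜] F)
    {s : Submodule 𝕜 E} {c : ℝ} (hT : ∀ x ∈ s, c * ‖x‖ ≤ ‖T x‖) :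
    ∀ x ∈ s.topologicalClosure, c * ‖x‖ ≤ ‖T x‖ :=
  fun _ hx =>
    closure_minimal hT (isClosed_le (continuous_const.mul continuous_norm) T.continuous.norm) hx

theorem ContinuousLinearMap.isClosed_map_of_mul_norm_le [CompleteSpace E] (T : E →L[𝕜] F)
    {s : Submodule 𝕜 E} (hs : IsClosed (s : Set E)) {c : ℝ} (hc : 0 < c)
    (hT : ∀ x ∈ s, c * ‖x‖ ≤ ‖T x‖) : IsClosed (s.map (T : E →ₗ[𝕜] F) : Set F) := by
  have : CompleteSpace s := hs.completeSpace_coe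
  have hanti : AntilipschitzWith ⟨c⁻¹, inv_nonneg.2 hc.le⟩ (T.comp s.subtypeL) :=
    (T.comp s.subtypeL).antilipschitz_of_bound fun x => (le_inv_mul_iff₀ hc).2 (hT x x.2)
  have hrange : Set.range (T.comp s.subtypeL) = (s.map (T : E →ₗ[𝕜] F) : Set F) := by
    ext; simp
  exact hrange ▸ hanti.isClosed_range (T.comp s.subtypeL).uniformContinuous

theorem ContinuousLinearMap.finiteDimensional_ker_and_isClosed_range_of_mul_norm_le
    [CompleteSpace 𝕜] [CompleteSpace E] (T : E →L[𝕜] F) {s : Submodule 𝕜 E} [s.CoFG]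
    (hs : IsClosed (s : Set E)) {c : ℝ} (hc : 0 < c) (hT : ∀ x ∈ s, c * ‖x‖ ≤ ‖T x‖) :
    FiniteDimensional 𝕜 (LinearMap.ker (T : E →ₗ[𝕜] F)) ∧ IsClosed (Set.range T) := by
  have hdisj : Disjoint (LinearMap.ker (T : E →ₗ[𝕜] F)) s := by
    refine Submodule.disjoint_def.2 fun x hker hs => norm_le_zero_iff.1 ?_
    have hx := hT x hs
    rw [show T x = 0 from hker, norm_zero] at hx
    exact nonpos_of_mul_nonpos_right hx hc
  refine ⟨.of_fg (Submodule.CoFG.fg_of_disjoint hdisj inferInstance), ?_⟩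
  exact LinearMap.isClosed_range_of_isClosed_map_of_finiteDimensional_quotient
    (T.isClosed_map_of_mul_norm_le hs hc hT)

theorem Submodule.codisjoint_of_dense_subset_sup [CompleteSpace 𝕜] {s t : Submodule 𝕜 E}
    (hs : IsClosed (s : Set E)) (ht : t.FG) {A : Set E} (hA : Dense A)
    (hAst : A ⊆ (s ⊔ t : Submodule 𝕜 E)) : Codisjoint s t := by
  have : FiniteDimensional 𝕜 t := .of_fg ht
  refine codisjoint_iff.2 (eq_top_iff'.2 fun x => ?_)
  exact (s.isClosed_sup_finiteDimensional t hs).closure_subset_iff.2 hAst (hA x)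

end SemiFredholm

section Supported

variable {α R M : Type*} [Ring R] [AddCommGroup M] [Module R M]

variable (R M) in
def funSupported (s : Set α) : Submodule R (α → M) where
  carrier := {f | support f ⊆ s}
  zero_mem' := by simp
  add_mem' hf hg := (support_add _ _).trans (Set.union_subset hf hg)
  smul_mem' c _ hf := (support_const_smul_subset c _).trans hf

theorem indicator_mem_funSupported (s : Set α) (f : α → M) : s.indicator f ∈ funSupported R M s :=
  Set.support_indicator_subset

theorem fg_funSupported [IsNoetherianRing R] [Module.Finite R M] {s : Set α} (hs : s.Finite) :
    (funSupported R M s).FG := by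
  have := hs.to_subtype
  refine Module.Finite.iff_fg.1 (Module.Finite.of_injective
    ((LinearMap.funLeft R M ((↑) : s → α)).comp (funSupported R M s).subtype) fun f g hfg => ?_)
  ext x
  by_cases hx : x ∈ s
  · exact congrFun hfg ⟨x, hx⟩
  · rw [notMem_support.1 fun h => hx (f.2 h), notMem_support.1 fun h => hx (g.2 h)]

end Supported

theorem Skew.indicator {φ : V × V → ℝ} (hφ : Skew φ) {T : Set (V × V)}
    (hT : ∀ e : V × V, (e.2, e.1) ∈ T ↔ e ∈ T) : Skew (T.indicator φ) := by
  intro e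
  by_cases he : e ∈ T
  · rw [Set.indicator_of_mem ((hT e).2 he), Set.indicator_of_mem he, hφ e]
  · rw [Set.indicator_of_notMem (mt (hT e).1 he), Set.indicator_of_notMem he, neg_zero]

theorem swap_mem_EK_iff (G : WGraph V) (K : Set V) (e : V × V) :
    (e.2, e.1) ∈ EK G K ↔ e ∈ EK G K :=
  ⟨fun h => ⟨G.symm _ h.1, h.2.2, h.2.1⟩, fun h => ⟨G.symm _ h.1, h.2.2, h.2.1⟩⟩

theorem EK_finite (G : WGraph V) {K : Set V} (hK : K.Finite) : (EK G K).Finite :=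
  (hK.biUnion fun v _ => G.locfin v).subset fun _ he => Set.mem_biUnion he.2.1 ⟨he.1, rfl⟩

def finPairs (G : WGraph V) : Submodule ℝ ((V → ℝ) × (V × V → ℝ)) where
  carrier := {p | FinSupp p.1 ∧ FinSupp p.2 ∧ Skew p.2 ∧ support p.2 ⊆ G.E}
  zero_mem' := by simp [FinSupp, Skew]
  add_mem' := by
    rintro p q ⟨hp₁, hp₂, hpskew, hpE⟩ ⟨hq₁, hq₂, hqskew, hqE⟩
    refine ⟨(hp₁.union hq₁).subset (support_add _ _), (hp₂.union hq₂).subset (support_add _ _),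
      fun e => ?_, (support_add _ _).trans (Set.union_subset hpE hqE)⟩
    simp only [Prod.snd_add, Pi.add_apply, hpskew e, hqskew e, neg_add]
  smul_mem' := by
    rintro c p ⟨hp₁, hp₂, hpskew, hpE⟩
    refine ⟨hp₁.subset (support_const_smul_subset c _), hp₂.subset (support_const_smul_subset c _),
      fun e => ?_, (support_const_smul_subset c _).trans hpE⟩
    simp only [Prod.smul_snd, Pi.smul_apply, hpskew e, smul_neg]

theorem indicator_mem_finPairs (G : WGraph V) {p : (V → ℝ) × (V × V → ℝ)} (hp : p ∈ finPairs G)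
    (A : Set V) {T : Set (V × V)} (hT : ∀ e : V × V, (e.2, e.1) ∈ T ↔ e ∈ T) :
    (A.indicator p.1, T.indicator p.2) ∈ finPairs G :=
  have hsupp : support (T.indicator p.2) ⊆ support p.2 :=
    Set.support_indicator.trans_subset Set.inter_subset_right
  ⟨hp.1.subset (Set.support_indicator.trans_subset Set.inter_subset_right), hp.2.1.subset hsupp,
    hp.2.2.1.indicator hT, hsupp.trans hp.2.2.2⟩

theorem finPairs_le_sup (G : WGraph V) (K : Set V) :
    finPairs G ≤ (finPairs G ⊓ (funSupported ℝ ℝ Kᶜ).prod (funSupported ℝ ℝ (EK G K)ᶜ)) ⊔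
      (funSupported ℝ ℝ K).prod (funSupported ℝ ℝ (EK G K)) := by
  intro p hp
  have hcompl (e : V × V) : (e.2, e.1) ∈ (EK G K)ᶜ ↔ e ∈ (EK G K)ᶜ :=
    not_congr (swap_mem_EK_iff G K e)
  refine Submodule.mem_sup.2 ⟨_, ⟨indicator_mem_finPairs G hp Kᶜ hcompl,
      Submodule.mem_prod.2 ⟨indicator_mem_funSupported _ _, indicator_mem_funSupported _ _⟩⟩,
    (K.indicator p.1, (EK G K).indicator p.2),
    Submodule.mem_prod.2 ⟨indicator_mem_funSupported _ _, indicator_mem_funSupported _ _⟩, ?_⟩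
  ext x <;> simp [Set.indicator_compl_add_self]

theorem stmt11_general (G : WGraph V)
    {W H : Type*} [NormedAddCommGroup W] [InnerProductSpace ℝ W] [CompleteSpace W]
    [NormedAddCommGroup H] [InnerProductSpace ℝ H]
    (j : ((V → ℝ) × (V × V → ℝ)) →ₗ[ℝ] W)
    (D : W →L[ℝ] H)
    (S : Set ((V → ℝ) × (V × V → ℝ)))
    (hS : S = {p | FinSupp p.1 ∧ FinSupp p.2 ∧ Skew p.2 ∧ Function.support p.2 ⊆ G.E})
    (hdense : Dense (j '' S))
    (K : Set V) (hK : K.Finite) (C : ℝ) (hC : 0 < C)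
    (hineq : ∀ f : V → ℝ, ∀ φ : V × V → ℝ,
      FinSupp f → FinSupp φ → Skew φ → Function.support φ ⊆ G.E →
      Function.support f ⊆ Kᶜ → Function.support φ ⊆ (EK G K)ᶜ →
      C * ‖j (f, φ)‖ ≤ ‖D (j (f, φ))‖) :
    FiniteDimensional ℝ (LinearMap.ker (D : W →ₗ[ℝ] H)) ∧ IsClosed (Set.range D) := by
  set outside := finPairs G ⊓ (funSupported ℝ ℝ Kᶜ).prod (funSupported ℝ ℝ (EK G K)ᶜ)
  set inside := (funSupported ℝ ℝ K).prod (funSupported ℝ ℝ (EK G K))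
  set W₀ := (outside.map j).topologicalClosure
  have hW₀ : IsClosed (W₀ : Set W) := (outside.map j).isClosed_topologicalClosure
  have hbound : ∀ w ∈ W₀, C * ‖w‖ ≤ ‖D w‖ := by
    refine D.mul_norm_le_norm_apply_of_mem_topologicalClosure ?_
    rintro _ ⟨p, ⟨⟨hf, hφ, hskew, hE⟩, hKc, hEKc⟩, rfl⟩
    exact hineq p.1 p.2 hf hφ hskew hE hKc hEKc
  have hcover : j '' S ⊆ (W₀ ⊔ inside.map j : Submodule ℝ W) := by
    rintro _ ⟨p, hp, rfl⟩
    have hsplit := Submodule.mem_map_of_mem (f := j) (finPairs_le_sup G K (hS ▸ hp))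
    rw [Submodule.map_sup] at hsplit
    exact sup_le_sup_right (outside.map j).le_topologicalClosure _ hsplit
  have hinside : (inside.map j).FG :=
    ((fg_funSupported hK).prod (fg_funSupported (EK_finite G hK))).map j
  have : W₀.CoFG := hinside.cofg_of_codisjoint
    (Submodule.codisjoint_of_dense_subset_sup hW₀ hinside hdense hcover).symm
  exact D.finiteDimensional_ker_and_isClosed_range_of_mul_norm_le hW₀ hC hbound

/-- the coercivity estimate outside a finite subgraph implies that
`D : W → ℓ²(G)` is semi-Fredholm. -/
theorem stmt11 (G : WGraph V) [Infinite V] (hconn : G.Connected)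
    {W H : Type*} [NormedAddCommGroup W] [InnerProductSpace ℝ W] [CompleteSpace W]
    [NormedAddCommGroup H] [InnerProductSpace ℝ H] [CompleteSpace H]
    (j : ((V → ℝ) × (V × V → ℝ)) →ₗ[ℝ] W)
    (emb : ((V → ℝ) × (V × V → ℝ)) →ₗ[ℝ] H)
    (D : W →L[ℝ] H)
    (S : Set ((V → ℝ) × (V × V → ℝ)))
    (hS : S = {p | FinSupp p.1 ∧ FinSupp p.2 ∧ Skew p.2 ∧ Function.support p.2 ⊆ G.E})
    (hdense : Dense (j '' S))
    (ι : W →L[ℝ] ((V → ℝ) × (V × V → ℝ)))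
    (hι : ∀ p ∈ S, ι (j p) = p)
    (hemb : ∀ p ∈ S, ‖emb p‖ = Real.sqrt (sqnormOn G Set.univ G.E p.1 p.2))
    (hD : ∀ p ∈ S, D (j p) = emb (deltaOp G p.2, dOp p.1))
    (K : Set V) (hK : K.Finite) (C : ℝ) (hC : 0 < C)
    (hineq : ∀ f : V → ℝ, ∀ φ : V × V → ℝ,
      FinSupp f → FinSupp φ → Skew φ → Function.support φ ⊆ G.E →
      Function.support f ⊆ Kᶜ → Function.support φ ⊆ (EK G K)ᶜ →
      C * ‖j (f, φ)‖ ≤ ‖D (j (f, φ))‖) :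
    FiniteDimensional ℝ (LinearMap.ker (D : W →ₗ[ℝ] H)) ∧ IsClosed (Set.range D) :=
  stmt11_general G j D S hS hdense K hK C hC hineq
end
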